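/- arXiv:1407.7445 — 3 statements merged into one kernel-verified Lean document; each statement's English description precedes it below -/
import Mathlib

section
/- Let $e_k^{ij}$ be real constants satisfying the null condition $\sum_{i,j,k=0}^3 e_k^{ij}\omega_k\omega_i\omega_j = 0$ for all $\omega_0 = -1$, $\omega \in \mathbb{S}^2$. Then there exists a constant $C > 0$ (depending only on the $e_k^{ij}$) such that for all smooth functions $u, v : \mathbb{R}^{1+3} \to \mathbb{R}$ and all points $(t,x)$ with $x \neq 0$, writing $\omega_\alpha = x_\alpha/|x|$ and $\bar{Z}_\alpha = \partial_\alpha + \omega_\alpha \partial_t$ for $\alpha = 1,2,3$, one has $\left|\sum_{i,j,k=0}^3 e_k^{ij} \partial_k u \, \partial^2_{ij} v\right| \le C\left(\sum_{\alpha=1}^3 |\bar{Z}_\alpha u| \cdot |\partial^2 v| + |\partial u| \cdot \sum_{\alpha=1}^3 |\bar{Z}_\alpha \partial v|\right)$, where $|\partial u|$ denotes the Euclidean norm of the full spacetime gradient and $|\partial^2 v|$ the norm of all second derivatives. -/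
set_option maxHeartbeats 1000000


open Finset

/-- first-order partial derivative `∂_i f` on `ℝ^{1+3}` (coordinate `0` is time) -/
noncomputable def pd (f : (Fin 4 → ℝ) → ℝ) (i : Fin 4) (x : Fin 4 → ℝ) : ℝ :=
  fderiv ℝ f x (Pi.single i 1)

/-- second-order partial derivative `∂_i ∂_j f` -/
noncomputable def pd2 (f : (Fin 4 → ℝ) → ℝ) (i j : Fin 4) (x : Fin 4 → ℝ) : ℝ :=
  pd (fun y => pd f j y) i x

theorem my_pd2_symm (v : (Fin 4 → ℝ) → ℝ) (hv : ContDiff ℝ (⊤ : ℕ∞) v) (x : Fin 4 → ℝ) (i j : Fin 4) :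
    pd2 v i j x = pd2 v j i x := by
  have hder : ∀ y, HasFDerivAt v (fderiv ℝ v y) y := fun y =>
    ((hv.differentiable (by simp)) y).hasFDerivAt
  have hd2 : DifferentiableAt ℝ (fderiv ℝ v) x :=
    ((hv.fderiv_right (m := 1) (by exact WithTop.coe_le_coe.2 le_top)).differentiable one_ne_zero) x
  have hsecond := second_derivative_symmetric hder hd2.hasFDerivAt
  have hval : ∀ i j : Fin 4, pd2 v i j x
      = (fderiv ℝ (fderiv ℝ v) x) (Pi.single i 1) (Pi.single j 1) := by
    intro i j
    unfold pd2 pd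
    rw [fderiv_clm_apply hd2 (differentiableAt_const _)]
    simp
  rw [hval i j, hval j i, hsecond]

theorem my_sum123 (f : Fin 4 → ℝ) :
    ∑ α ∈ ({1, 2, 3} : Finset (Fin 4)), f α = f 1 + f 2 + f 3 := by
  rw [show ({1,2,3} : Finset (Fin 4)) = insert 1 (insert 2 {3}) from rfl,
     Finset.sum_insert (by decide), Finset.sum_insert (by decide), Finset.sum_singleton]
  ring

theorem my_abs3 (f : Fin 4 → Fin 4 → Fin 4 → ℝ) :
    |∑ i, ∑ j, ∑ k, f i j k| ≤ ∑ i, ∑ j, ∑ k, |f i j k| := by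
  refine (Finset.abs_sum_le_sum_abs _ _).trans (Finset.sum_le_sum fun i _ => ?_)
  refine (Finset.abs_sum_le_sum_abs _ _).trans (Finset.sum_le_sum fun j _ => ?_)
  exact Finset.abs_sum_le_sum_abs _ _

theorem my_mul3 (a b c a' b' c' : ℝ) (ha : |a| ≤ a') (hb : |b| ≤ b') (hc : |c| ≤ c') :
    |a * b * c| ≤ a' * b' * c' := by
  rw [abs_mul, abs_mul]
  exact mul_le_mul (mul_le_mul ha hb (abs_nonneg _) ((abs_nonneg a).trans ha)) hc (abs_nonneg _)
    (mul_nonneg ((abs_nonneg a).trans ha) ((abs_nonneg b).trans hb))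

/-- under the null condition, the null form `∑ e_k^{ij} ∂_k u ∂²_{ij} v`
is bounded by good-derivative combinations. -/
theorem stmt_1 (e : Fin 4 → Fin 4 → Fin 4 → ℝ)
    (hsym : ∀ i j k, e i j k = e j i k)
    (hnull : ∀ ω : Fin 4 → ℝ, ω 0 = -1 → ω 1 ^ 2 + ω 2 ^ 2 + ω 3 ^ 2 = 1 →
      ∑ i, ∑ j, ∑ k, e i j k * ω k * ω i * ω j = 0) :
    ∃ C > 0, ∀ u v : (Fin 4 → ℝ) → ℝ, ContDiff ℝ (⊤ : ℕ∞) u → ContDiff ℝ (⊤ : ℕ∞) v →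
      ∀ x : Fin 4 → ℝ, x 1 ^ 2 + x 2 ^ 2 + x 3 ^ 2 ≠ 0 →
      |∑ i, ∑ j, ∑ k, e i j k * pd u k x * pd2 v i j x| ≤
        C * ((∑ α ∈ ({1, 2, 3} : Finset (Fin 4)),
                |pd u α x + (x α / Real.sqrt (x 1 ^ 2 + x 2 ^ 2 + x 3 ^ 2)) * pd u 0 x|) *
              Real.sqrt (∑ i, ∑ j, (pd2 v i j x) ^ 2) +
            Real.sqrt (∑ i, (pd u i x) ^ 2) *
              (∑ α ∈ ({1, 2, 3} : Finset (Fin 4)),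
                Real.sqrt (∑ j, (pd2 v α j x +
                  (x α / Real.sqrt (x 1 ^ 2 + x 2 ^ 2 + x 3 ^ 2)) * pd2 v 0 j x) ^ 2))) := by
  have hEnn0 : (0:ℝ) ≤ ∑ i, ∑ j, ∑ k, |e i j k| :=
    Finset.sum_nonneg fun i _ => Finset.sum_nonneg fun j _ => Finset.sum_nonneg fun k _ =>
      abs_nonneg _
  refine ⟨2 * (∑ i, ∑ j, ∑ k, |e i j k|) + 1, by linarith, ?_⟩
  intro u v hu hv x hx
  set E := ∑ i, ∑ j, ∑ k, |e i j k| with hE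
  have hEnn : 0 ≤ E := hEnn0
  rw [my_sum123, my_sum123]
  set r := Real.sqrt (x 1 ^ 2 + x 2 ^ 2 + x 3 ^ 2) with hrdef
  have hsq : 0 ≤ x 1 ^ 2 + x 2 ^ 2 + x 3 ^ 2 := by positivity
  have hr2 : r ^ 2 = x 1 ^ 2 + x 2 ^ 2 + x 3 ^ 2 := Real.sq_sqrt hsq
  have hrpos : 0 < r := Real.sqrt_pos.2 (lt_of_le_of_ne hsq (Ne.symm hx))
  set ω : Fin 4 → ℝ := fun k => if k = 0 then -1 else x k / r with hωdef
  have hω0 : ω 0 = -1 := by simp [hωdef]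
  have hω1 : ω 1 = x 1 / r := by simp [hωdef]
  have hω2 : ω 2 = x 2 / r := by simp [hωdef]
  have hω3 : ω 3 = x 3 / r := by simp [hωdef]
  rw [← hω1, ← hω2, ← hω3]
  have hnorm : ω 1 ^ 2 + ω 2 ^ 2 + ω 3 ^ 2 = 1 := by
    rw [hω1, hω2, hω3]
    field_simp
    linarith [hr2]
  have hωbd : ∀ k, |ω k| ≤ 1 := by
    intro k
    have hbd : ∀ α : Fin 4, |x α / r| ≤ 1 → |x α / r| ≤ 1 := fun _ h => h
    have key : ∀ α : Fin 4, x α ^ 2 ≤ r ^ 2 → |x α / r| ≤ 1 := by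
      intro α h
      rw [abs_div, abs_of_pos hrpos, div_le_one hrpos, abs_le]
      constructor <;> nlinarith
    fin_cases k
    · show |ω 0| ≤ 1
      simp [hω0]
    · show |ω 1| ≤ 1
      rw [hω1]; exact key 1 (by nlinarith [sq_nonneg (x 2), sq_nonneg (x 3)])
    · show |ω 2| ≤ 1
      rw [hω2]; exact key 2 (by nlinarith [sq_nonneg (x 1), sq_nonneg (x 3)])
    · show |ω 3| ≤ 1
      rw [hω3]; exact key 3 (by nlinarith [sq_nonneg (x 1), sq_nonneg (x 2)])
  have hsymv : ∀ i j, pd2 v i j x = pd2 v j i x := fun i j => my_pd2_symm v hv x i j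
  -- abbreviations
  set Zu : Fin 4 → ℝ := fun k => pd u k x + ω k * pd u 0 x with hZudef
  set W : Fin 4 → Fin 4 → ℝ := fun i j => pd2 v i j x + ω i * pd2 v 0 j x with hWdef
  set M1 := Real.sqrt (∑ i, (pd u i x) ^ 2) with hM1def
  set M2 := Real.sqrt (∑ i, ∑ j, (pd2 v i j x) ^ 2) with hM2def
  set S1 := |Zu 1| + |Zu 2| + |Zu 3| with hS1def
  set G : Fin 4 → ℝ := fun α => Real.sqrt (∑ j, (W α j) ^ 2) with hGdef
  set S2 := G 1 + G 2 + G 3 with hS2def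
  -- the goal RHS should now be expressible via Zu, G
  have hgoalrw : (|pd u 1 x + ω 1 * pd u 0 x| + |pd u 2 x + ω 2 * pd u 0 x|
        + |pd u 3 x + ω 3 * pd u 0 x|) = S1 := by
    rw [hS1def, hZudef]
  -- basic nonnegativity
  have hM1nn : 0 ≤ M1 := Real.sqrt_nonneg _
  have hM2nn : 0 ≤ M2 := Real.sqrt_nonneg _
  have hS1nn : 0 ≤ S1 := by positivity
  have hS2nn : 0 ≤ S2 := by
    rw [hS2def, hGdef]; positivity
  -- pointwise bounds
  have hZu0 : Zu 0 = 0 := by rw [hZudef]; simp [hω0]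
  have hW0 : ∀ j, W 0 j = 0 := by intro j; rw [hWdef]; simp [hω0]
  have hZle : ∀ k, |Zu k| ≤ S1 := by
    intro k
    have h1 : 0 ≤ |Zu 1| := abs_nonneg _
    have h2 : 0 ≤ |Zu 2| := abs_nonneg _
    have h3 : 0 ≤ |Zu 3| := abs_nonneg _
    fin_cases k
    · show |Zu 0| ≤ S1
      rw [hZu0]; simpa [hS1def] using by linarith
    · show |Zu 1| ≤ S1
      rw [hS1def]; linarith
    · show |Zu 2| ≤ S1
      rw [hS1def]; linarith
    · show |Zu 3| ≤ S1
      rw [hS1def]; linarith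
  have hpd2le : ∀ i j, |pd2 v i j x| ≤ M2 := by
    intro i j
    rw [hM2def, ← Real.sqrt_sq_eq_abs]
    apply Real.sqrt_le_sqrt
    calc (pd2 v i j x) ^ 2 ≤ ∑ j', (pd2 v i j' x) ^ 2 :=
          Finset.single_le_sum (f := fun j' => (pd2 v i j' x) ^ 2)
            (fun _ _ => sq_nonneg _) (Finset.mem_univ j)
      _ ≤ ∑ i', ∑ j', (pd2 v i' j' x) ^ 2 :=
          Finset.single_le_sum (f := fun i' => ∑ j', (pd2 v i' j' x) ^ 2)
            (fun _ _ => Finset.sum_nonneg fun _ _ => sq_nonneg _) (Finset.mem_univ i)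
  have hpule : |pd u 0 x| ≤ M1 := by
    rw [hM1def, ← Real.sqrt_sq_eq_abs]
    exact Real.sqrt_le_sqrt
      (Finset.single_le_sum (f := fun i' => (pd u i' x) ^ 2)
        (fun _ _ => sq_nonneg _) (Finset.mem_univ (0 : Fin 4)))
  have hWG : ∀ i j, |W i j| ≤ G i := by
    intro i j
    rw [hGdef, ← Real.sqrt_sq_eq_abs]
    exact Real.sqrt_le_sqrt
      (Finset.single_le_sum (f := fun j' => (W i j') ^ 2)
        (fun _ _ => sq_nonneg _) (Finset.mem_univ j))
  have hGnn : ∀ i, 0 ≤ G i := by intro i; rw [hGdef]; positivity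
  have hWle : ∀ i j, |W i j| ≤ S2 := by
    intro i j
    have h1 := hGnn 1
    have h2 := hGnn 2
    have h3 := hGnn 3
    fin_cases i
    · show |W 0 j| ≤ S2
      rw [hW0 j]; simpa [hS2def] using by linarith
    · show |W 1 j| ≤ S2
      rw [hS2def]; linarith [hWG 1 j]
    · show |W 2 j| ≤ S2
      rw [hS2def]; linarith [hWG 2 j]
    · show |W 3 j| ≤ S2
      rw [hS2def]; linarith [hWG 3 j]
  -- key algebraic identity
  have h0 : (∑ i, ∑ j, ∑ k, e i j k * ω k * ω i * ω j) = 0 := hnull ω hω0 hnorm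
  have expand : ∀ i j k : Fin 4, e i j k * pd u k x * pd2 v i j x
      = e i j k * Zu k * pd2 v i j x - e i j k * ω k * pd u 0 x * W i j
        + e i j k * ω k * ω i * pd u 0 x * W j 0
        - e i j k * ω k * ω i * ω j * (pd u 0 x * pd2 v 0 0 x) := by
    intro i j k
    rw [hZudef, hWdef]
    simp only
    rw [show pd2 v 0 j x = pd2 v j 0 x from hsymv 0 j]
    ring
  have key : (∑ i, ∑ j, ∑ k, e i j k * pd u k x * pd2 v i j x)
      = (∑ i, ∑ j, ∑ k, e i j k * Zu k * pd2 v i j x)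
        - (∑ i, ∑ j, ∑ k, e i j k * ω k * pd u 0 x * W i j)
        + (∑ i, ∑ j, ∑ k, e i j k * ω k * ω i * pd u 0 x * W j 0) := by
    have step1 : (∑ i, ∑ j, ∑ k, e i j k * pd u k x * pd2 v i j x)
        = ∑ i, ∑ j, ∑ k, (e i j k * Zu k * pd2 v i j x - e i j k * ω k * pd u 0 x * W i j
            + e i j k * ω k * ω i * pd u 0 x * W j 0
            - e i j k * ω k * ω i * ω j * (pd u 0 x * pd2 v 0 0 x)) :=
      Finset.sum_congr rfl fun i _ => Finset.sum_congr rfl fun j _ =>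
        Finset.sum_congr rfl fun k _ => expand i j k
    have hD : (∑ i, ∑ j, ∑ k, e i j k * ω k * ω i * ω j * (pd u 0 x * pd2 v 0 0 x)) = 0 := by
      have hfac : (∑ i, ∑ j, ∑ k, e i j k * ω k * ω i * ω j) * (pd u 0 x * pd2 v 0 0 x)
          = ∑ i, ∑ j, ∑ k, e i j k * ω k * ω i * ω j * (pd u 0 x * pd2 v 0 0 x) := by
        rw [Finset.sum_mul]
        refine Finset.sum_congr rfl fun i _ => ?_
        rw [Finset.sum_mul]
        refine Finset.sum_congr rfl fun j _ => ?_
        rw [Finset.sum_mul]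
      rw [← hfac, h0, zero_mul]
    rw [step1]
    simp only [Finset.sum_sub_distrib, Finset.sum_add_distrib]
    rw [hD]
    ring
  rw [key]
  -- bound the three sums
  have bound1 : |∑ i, ∑ j, ∑ k, e i j k * Zu k * pd2 v i j x| ≤ E * (S1 * M2) := by
    refine (my_abs3 _).trans ?_
    rw [hE, Finset.sum_mul]
    refine Finset.sum_le_sum fun i _ => ?_
    rw [Finset.sum_mul]
    refine Finset.sum_le_sum fun j _ => ?_
    rw [Finset.sum_mul]
    refine Finset.sum_le_sum fun k _ => ?_
    rw [← mul_assoc]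
    exact my_mul3 _ _ _ _ _ _ le_rfl (hZle k) (hpd2le i j)
  have bound2 : |∑ i, ∑ j, ∑ k, e i j k * ω k * pd u 0 x * W i j| ≤ E * (M1 * S2) := by
    refine (my_abs3 _).trans ?_
    rw [hE, Finset.sum_mul]
    refine Finset.sum_le_sum fun i _ => ?_
    rw [Finset.sum_mul]
    refine Finset.sum_le_sum fun j _ => ?_
    rw [Finset.sum_mul]
    refine Finset.sum_le_sum fun k _ => ?_
    rw [← mul_assoc]
    refine my_mul3 _ _ _ _ _ _ ?_ hpule (hWle i j)
    calc |e i j k * ω k| = |e i j k| * |ω k| := abs_mul _ _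
      _ ≤ |e i j k| * 1 := by
          exact mul_le_mul_of_nonneg_left (hωbd k) (abs_nonneg _)
      _ = |e i j k| := mul_one _
  have bound3 : |∑ i, ∑ j, ∑ k, e i j k * ω k * ω i * pd u 0 x * W j 0| ≤ E * (M1 * S2) := by
    refine (my_abs3 _).trans ?_
    rw [hE, Finset.sum_mul]
    refine Finset.sum_le_sum fun i _ => ?_
    rw [Finset.sum_mul]
    refine Finset.sum_le_sum fun j _ => ?_
    rw [Finset.sum_mul]
    refine Finset.sum_le_sum fun k _ => ?_
    rw [← mul_assoc]
    refine my_mul3 _ _ _ _ _ _ ?_ hpule (hWle j 0)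
    calc |e i j k * ω k * ω i| = |e i j k| * |ω k| * |ω i| := by rw [abs_mul, abs_mul]
      _ ≤ |e i j k| * 1 * 1 := by
          refine mul_le_mul (mul_le_mul_of_nonneg_left (hωbd k) (abs_nonneg _)) (hωbd i)
            (abs_nonneg _) (by positivity)
      _ = |e i j k| := by ring
  -- combine
  have habs : |(∑ i, ∑ j, ∑ k, e i j k * Zu k * pd2 v i j x)
      - (∑ i, ∑ j, ∑ k, e i j k * ω k * pd u 0 x * W i j)
      + (∑ i, ∑ j, ∑ k, e i j k * ω k * ω i * pd u 0 x * W j 0)|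
      ≤ E * (S1 * M2) + E * (M1 * S2) + E * (M1 * S2) := by
    refine (abs_add_le _ _).trans ?_
    refine add_le_add ((abs_sub _ _).trans (add_le_add bound1 bound2)) bound3
  refine habs.trans ?_
  have hP1 : 0 ≤ S1 * M2 := mul_nonneg hS1nn hM2nn
  have hP2 : 0 ≤ M1 * S2 := mul_nonneg hM1nn hS2nn
  nlinarith [mul_nonneg hEnn hP1, mul_nonneg hEnn hP2]
end

section
/- Let $\nu' > 0$, $C_0 > 0$. Suppose $W : \mathbb{R}^3 \to (0,\infty)$ and $u : \mathbb{R}^3 \to \mathbb{R}$ is smooth, compactly supported, and radial: $u(x) = v(|x|)$, $W(x) = w(|x|)$ with $v, w$ smooth on $[0,\infty)$. Suppose there is a smooth increasing function $\rho : [0,\infty) \to (-\infty,1]$ with $\rho'(r) > 0$ for all $r$, and that $\frac{d}{dr}\big(\rho'(r)\,w(r)\,r^2\big) \ge 0$ for all $r > 0$. Then $\int_0^\infty \left(\frac{|v(r)|}{|\rho(r)-2|}\,\rho'(r)\right)^2 w(r)\, r^2\,dr \le 4\int_0^\infty |v'(r)|^2\, w(r)\, r^2\,dr$. -/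
open MeasureTheory

/-- weighted Poincaré/Hardy inequality on the half-line (radial version of
Lemma 5.1): if `d/dr(ρ'(r) w(r) r²) ≥ 0` then
`∫ (|v|/|ρ-2| ρ')² w r² dr ≤ 4 ∫ |v'|² w r² dr`. -/
theorem stmt_5 (ν' C0 : ℝ) (hν' : 0 < ν') (hC0 : 0 < C0)
    (W u : EuclideanSpace ℝ (Fin 3) → ℝ) (v w ρ : ℝ → ℝ)
    (hW : ∀ x, 0 < W x)
    (hu : ContDiff ℝ (⊤ : ℕ∞) u) (hsupp : HasCompactSupport u)
    (hurad : ∀ x, u x = v ‖x‖) (hWrad : ∀ x, W x = w ‖x‖)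
    (hv : ContDiffOn ℝ (⊤ : ℕ∞) v (Set.Ici 0)) (hw : ContDiffOn ℝ (⊤ : ℕ∞) w (Set.Ici 0))
    (hρ : ContDiffOn ℝ (⊤ : ℕ∞) ρ (Set.Ici 0))
    (hρle : ∀ r ≥ (0 : ℝ), ρ r ≤ 1)
    (hρmono : MonotoneOn ρ (Set.Ici 0))
    (hρ' : ∀ r ≥ (0 : ℝ), 0 < deriv ρ r)
    (hmono : ∀ r > (0 : ℝ), 0 ≤ deriv (fun s => deriv ρ s * w s * s ^ 2) r) :
    (∫ r in Set.Ioi (0 : ℝ), ((|v r| / |ρ r - 2|) * deriv ρ r) ^ 2 * w r * r ^ 2) ≤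
      4 * ∫ r in Set.Ioi (0 : ℝ), (deriv v r) ^ 2 * w r * r ^ 2 := by
  classical
  -- within-derivatives, continuous up to the boundary
  set p : ℝ → ℝ := derivWithin ρ (Set.Ici 0) with hpdef
  set q : ℝ → ℝ := derivWithin v (Set.Ici 0) with hqdef
  have hpe : ∀ r : ℝ, 0 < r → p r = deriv ρ r := fun r hr =>
    derivWithin_of_mem_nhds (Ici_mem_nhds hr)
  have hqe : ∀ r : ℝ, 0 < r → q r = deriv v r := fun r hr =>
    derivWithin_of_mem_nhds (Ici_mem_nhds hr)
  have hcv : ContinuousOn v (Set.Ici 0) := hv.continuousOn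
  have hcw : ContinuousOn w (Set.Ici 0) := hw.continuousOn
  have hcρ : ContinuousOn ρ (Set.Ici 0) := hρ.continuousOn
  have hcp : ContinuousOn p (Set.Ici 0) :=
    hρ.continuousOn_derivWithin (uniqueDiffOn_Ici 0) (by simp)
  have hcq : ContinuousOn q (Set.Ici 0) :=
    hv.continuousOn_derivWithin (uniqueDiffOn_Ici 0) (by simp)
  -- positivity of the weight
  have hwpos : ∀ r : ℝ, 0 ≤ r → 0 < w r := by
    intro r hr
    have h := hW (EuclideanSpace.single (0 : Fin 3) r)
    rwa [hWrad, EuclideanSpace.norm_single, Real.norm_eq_abs, abs_of_nonneg hr] at h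
  have hρ2 : ∀ r : ℝ, 0 ≤ r → 1 ≤ 2 - ρ r := fun r hr => by
    have := hρle r hr; linarith
  have habs : ∀ r : ℝ, 0 ≤ r → |ρ r - 2| = 2 - ρ r := fun r hr => by
    rw [abs_of_nonpos (by have := hρle r hr; linarith)]; ring
  -- support radius
  obtain ⟨R, hR0, hRsupp⟩ := hsupp.exists_pos_le_norm
  have hv0 : ∀ r : ℝ, R ≤ r → v r = 0 := by
    intro r hr
    have hr0 : (0 : ℝ) ≤ r := le_trans hR0.le hr
    have h := hRsupp (EuclideanSpace.single (0 : Fin 3) r)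
      (by rw [EuclideanSpace.norm_single, Real.norm_eq_abs, abs_of_nonneg hr0]; exact hr)
    rwa [hurad, EuclideanSpace.norm_single, Real.norm_eq_abs, abs_of_nonneg hr0] at h
  have hdv0 : ∀ r : ℝ, R < r → deriv v r = 0 := by
    intro r hr
    have hev : v =ᶠ[nhds r] (fun _ => (0 : ℝ)) := by
      filter_upwards [Ioi_mem_nhds hr] with s hs using hv0 s (le_of_lt hs)
    rw [hev.deriv_eq]; exact deriv_const r 0
  -- auxiliary functions
  set F : ℝ → ℝ := fun r => (2 - ρ r)⁻¹ with hFdef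
  set G : ℝ → ℝ := fun r => p r * w r * r ^ 2 with hGdef
  set A : ℝ → ℝ := fun r => ((|v r| / |ρ r - 2|) * p r) ^ 2 * w r * r ^ 2 with hAdef
  set B : ℝ → ℝ := fun r => q r ^ 2 * w r * r ^ 2 with hBdef
  -- rewrite both integrals
  have hgoalL : (∫ r in Set.Ioi (0 : ℝ), ((|v r| / |ρ r - 2|) * deriv ρ r) ^ 2 * w r * r ^ 2)
      = ∫ r in Set.Ioi (0 : ℝ), A r := by
    refine setIntegral_congr_fun measurableSet_Ioi ?_
    intro r hr
    simp only [hAdef, hpe r hr]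
  have hgoalR : (∫ r in Set.Ioi (0 : ℝ), (deriv v r) ^ 2 * w r * r ^ 2)
      = ∫ r in Set.Ioi (0 : ℝ), B r := by
    refine setIntegral_congr_fun measurableSet_Ioi ?_
    intro r hr
    simp only [hBdef, hqe r hr]
  rw [hgoalL, hgoalR]
  -- continuity of A and B on [0,∞)
  have hcA : ContinuousOn A (Set.Ici 0) := by
    have h1 : ContinuousOn (fun r => |v r| / |ρ r - 2|) (Set.Ici 0) :=
      hcv.abs.div (hcρ.sub continuousOn_const).abs
        (fun r hr => by rw [habs r hr]; nlinarith [hρ2 r hr])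
    exact (((h1.mul hcp).pow 2).mul hcw).mul ((continuous_pow 2).continuousOn)
  have hcB : ContinuousOn B (Set.Ici 0) :=
    ((hcq.pow 2).mul hcw).mul ((continuous_pow 2).continuousOn)
  -- vanishing beyond R
  have hAzero : ∀ r ∈ Set.Ioi R, A r = 0 := fun r hr => by
    simp [hAdef, hv0 r (le_of_lt hr)]
  have hBzero : ∀ r ∈ Set.Ioi R, B r = 0 := fun r hr => by
    have hq0 : q r = 0 := by rw [hqe r (lt_trans hR0 hr), hdv0 r hr]
    simp [hBdef, hq0]
  -- integrability
  have hIccsub : Set.Icc (0 : ℝ) R ⊆ Set.Ici 0 := Set.Icc_subset_Ici_self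
  have hAicc : IntegrableOn A (Set.Ioc 0 R) :=
    ((hcA.mono hIccsub).integrableOn_Icc).mono_set Set.Ioc_subset_Icc_self
  have hBicc : IntegrableOn B (Set.Ioc 0 R) :=
    ((hcB.mono hIccsub).integrableOn_Icc).mono_set Set.Ioc_subset_Icc_self
  have hAiR : IntegrableOn A (Set.Ioi R) :=
    (integrableOn_congr_fun (fun r hr => (hAzero r hr).symm) measurableSet_Ioi).mp
      (integrableOn_zero)
  have hBiR : IntegrableOn B (Set.Ioi R) :=
    (integrableOn_congr_fun (fun r hr => (hBzero r hr).symm) measurableSet_Ioi).mp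
      (integrableOn_zero)
  have hAIoi : IntegrableOn A (Set.Ioi 0) := by
    rw [← Set.Ioc_union_Ioi_eq_Ioi hR0.le]; exact hAicc.union hAiR
  have hBIoi : IntegrableOn B (Set.Ioi 0) := by
    rw [← Set.Ioc_union_Ioi_eq_Ioi hR0.le]; exact hBicc.union hBiR
  have hBnn : ∀ r ∈ Set.Ioi (0 : ℝ), 0 ≤ B r := fun r hr =>
    mul_nonneg (mul_nonneg (sq_nonneg _) (hwpos r (le_of_lt hr)).le) (sq_nonneg r)
  -- the key estimate on [ε, R]
  have key : ∀ ε : ℝ, 0 < ε → ε < R →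
      (∫ r in Set.Ioc ε R, A r) ≤ 4 * ∫ r in Set.Ioi (0 : ℝ), B r := by
    intro ε hε hεR
    have hsub : Set.Icc ε R ⊆ Set.Ioi 0 := fun x hx => lt_of_lt_of_le hε hx.1
    have hsub' : Set.Icc ε R ⊆ Set.Ici 0 := fun x hx => Set.mem_Ici.mpr (le_of_lt (Set.mem_Ioi.mp (hsub hx)))
    -- smoothness of G on (0,∞)
    have hρO : ContDiffOn ℝ (⊤ : ℕ∞) (deriv ρ) (Set.Ioi 0) :=
      (hρ.mono Set.Ioi_subset_Ici_self).deriv_of_isOpen isOpen_Ioi (by simp)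
    have hGO : ContDiffOn ℝ (⊤ : ℕ∞) G (Set.Ioi 0) := by
      refine ContDiffOn.congr ((hρO.mul (hw.mono Set.Ioi_subset_Ici_self)).mul
        ((contDiff_id.pow 2).contDiffOn)) ?_
      intro r hr
      simp only [hGdef, hpe r hr, id_eq]
    have hG'c : ContinuousOn (deriv G) (Set.Ioi 0) :=
      hGO.continuousOn_deriv_of_isOpen isOpen_Ioi (by simp)
    have hG'nn : ∀ r : ℝ, 0 < r → 0 ≤ deriv G r := by
      intro r hr
      have hev : G =ᶠ[nhds r] (fun s => deriv ρ s * w s * s ^ 2) := by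
        filter_upwards [Ioi_mem_nhds hr] with s hs
        simp only [hGdef, hpe s hs]
      rw [hev.deriv_eq]; exact hmono r hr
    -- pointwise derivative of Φ
    have hρat : ∀ r ∈ Set.Icc ε R, HasDerivAt ρ (p r) r := by
      intro r hr
      have h := ((hρ.contDiffAt (Ici_mem_nhds (hsub hr))).differentiableAt (by simp)).hasDerivAt
      rwa [← hpe r (hsub hr)] at h
    have hvat : ∀ r ∈ Set.Icc ε R, HasDerivAt v (q r) r := by
      intro r hr
      have h := ((hv.contDiffAt (Ici_mem_nhds (hsub hr))).differentiableAt (by simp)).hasDerivAt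
      rwa [← hqe r (hsub hr)] at h
    have hGat : ∀ r ∈ Set.Icc ε R, HasDerivAt G (deriv G r) r := fun r hr =>
      (((hGO.contDiffAt (isOpen_Ioi.mem_nhds (hsub hr))).differentiableAt (by simp))).hasDerivAt
    set Φ : ℝ → ℝ := fun r => v r ^ 2 * (F r * G r) with hΦdef
    set D : ℝ → ℝ := fun r => 2 * v r * q r * (F r * G r)
        + v r ^ 2 * ((p r * F r ^ 2) * G r + F r * deriv G r) with hDdef
    have hΦat : ∀ r ∈ Set.Icc ε R, HasDerivAt Φ (D r) r := by
      intro r hr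
      have h2ρ : (2 - ρ r) ≠ 0 := by nlinarith [hρ2 r (hsub' hr)]
      have hFat : HasDerivAt F (p r * F r ^ 2) r := by
        have h := ((hρat r hr).const_sub 2).inv h2ρ
        refine (h.congr_deriv ?_ : HasDerivAt (fun x => (2 - ρ x)⁻¹) _ r); symm
        simp only [hFdef]
        rw [div_eq_mul_inv, ← inv_pow]
        ring
      have hsq : HasDerivAt (fun s => v s ^ 2) (2 * v r * q r) r := by
        simpa using (hvat r hr).fun_pow 2
      simpa only [hDdef] using hsq.fun_mul (hFat.fun_mul (hGat r hr))
    -- continuity on [ε, R] of all integrands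
    have hcF : ContinuousOn F (Set.Icc ε R) :=
      (continuousOn_const.sub (hcρ.mono hsub')).inv₀
        (fun r hr => by simp only [Pi.sub_apply]; nlinarith [hρ2 r (hsub' hr)])
    have hcG : ContinuousOn G (Set.Icc ε R) :=
      (((hcp.mono hsub').mul (hcw.mono hsub')).mul ((continuous_pow 2).continuousOn))
    have hcD : ContinuousOn D (Set.Icc ε R) := by
      refine ContinuousOn.add ?_ ?_
      · exact ((continuousOn_const.mul (hcv.mono hsub')).mul (hcq.mono hsub')).mul
          (hcF.mul hcG)
      · exact ((hcv.mono hsub').pow 2).mul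
          ((((hcp.mono hsub').mul (hcF.pow 2)).mul hcG).add (hcF.mul (hG'c.mono hsub)))
    have hcA' : ContinuousOn A (Set.Icc ε R) := hcA.mono hsub'
    have hcB' : ContinuousOn B (Set.Icc ε R) := hcB.mono hsub'
    have hDint : IntervalIntegrable D volume ε R :=
      (by rwa [Set.uIcc_of_le hεR.le] : ContinuousOn D (Set.uIcc ε R)).intervalIntegrable
    have hAint : IntervalIntegrable A volume ε R :=
      (by rwa [Set.uIcc_of_le hεR.le] : ContinuousOn A (Set.uIcc ε R)).intervalIntegrable
    have hBint : IntervalIntegrable B volume ε R :=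
      (by rwa [Set.uIcc_of_le hεR.le] : ContinuousOn B (Set.uIcc ε R)).intervalIntegrable
    -- fundamental theorem of calculus
    have hFTC : ∫ r in ε..R, D r = Φ R - Φ ε :=
      intervalIntegral.integral_eq_sub_of_hasDerivAt
        (fun r hr => hΦat r (by rwa [Set.uIcc_of_le hεR.le] at hr)) hDint
    have hΦR : Φ R = 0 := by simp [hΦdef, hv0 R le_rfl]
    have hΦε : 0 ≤ Φ ε := by
      have hF0 : 0 ≤ F ε := inv_nonneg.mpr (by linarith [hρ2 ε hε.le])
      have hG0 : 0 ≤ G ε := by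
        have hp0 : 0 < p ε := by rw [hpe ε hε]; exact hρ' ε hε.le
        exact mul_nonneg (mul_nonneg hp0.le (hwpos ε hε.le).le) (sq_nonneg ε)
      exact mul_nonneg (sq_nonneg _) (mul_nonneg hF0 hG0)
    have hDle : (∫ r in ε..R, D r) ≤ 0 := by rw [hFTC, hΦR]; linarith
    -- pointwise inequality
    have hpt : ∀ r ∈ Set.Icc ε R, A r ≤ D r + (A r / 2 + 2 * B r) := by
      intro r hr
      have hr0 : 0 < r := hsub hr
      have hFnn : 0 ≤ F r := inv_nonneg.mpr (by linarith [hρ2 r hr0.le])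
      have hwr : 0 ≤ w r := (hwpos r hr0.le).le
      have hG' := hG'nn r hr0
      have hAeq : A r = v r ^ 2 * F r ^ 2 * p r ^ 2 * (w r * r ^ 2) := by
        simp only [hAdef, hFdef, habs r hr0.le, div_eq_mul_inv, mul_pow, sq_abs]
        ring
      have hkey : 0 ≤ (w r * r ^ 2) * (v r * F r * p r + 2 * q r) ^ 2 :=
        mul_nonneg (mul_nonneg hwr (sq_nonneg r)) (sq_nonneg _)
      have hkey2 : 0 ≤ v r ^ 2 * (F r * deriv G r) :=
        mul_nonneg (sq_nonneg _) (mul_nonneg hFnn hG')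
      rw [hAeq]
      simp only [hDdef, hBdef, hGdef]
      nlinarith [hkey, hkey2]
    -- integrate the pointwise inequality
    have hmono2 : (∫ r in ε..R, A r) ≤ ∫ r in ε..R, (D r + (A r / 2 + 2 * B r)) :=
      intervalIntegral.integral_mono_on hεR.le hAint
        (hDint.add ((hAint.div_const 2).add (hBint.const_mul 2))) hpt
    rw [intervalIntegral.integral_add hDint ((hAint.div_const 2).add (hBint.const_mul 2)),
      intervalIntegral.integral_add (hAint.div_const 2) (hBint.const_mul 2),
      intervalIntegral.integral_div, intervalIntegral.integral_const_mul] at hmono2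
    have hBle : (∫ r in ε..R, B r) ≤ ∫ r in Set.Ioi (0 : ℝ), B r := by
      rw [intervalIntegral.integral_of_le hεR.le]
      refine setIntegral_mono_set hBIoi ?_ (HasSubset.Subset.eventuallyLE ?_)
      · exact ae_restrict_of_forall_mem measurableSet_Ioi hBnn
      · exact fun x hx => lt_trans hε hx.1
    rw [← intervalIntegral.integral_of_le hεR.le]
    linarith
  -- split off the Ioi R part
  have hsplit : (∫ r in Set.Ioi (0 : ℝ), A r) = ∫ r in Set.Ioc (0 : ℝ) R, A r := by
    rw [← Set.Ioc_union_Ioi_eq_Ioi hR0.le,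
      setIntegral_union Set.Ioc_disjoint_Ioi_same measurableSet_Ioi hAicc hAiR,
      setIntegral_eq_zero_of_forall_eq_zero hAzero, add_zero]
  rw [hsplit]
  -- uniform bound for A near 0
  obtain ⟨M, hM⟩ := (isCompact_Icc : IsCompact (Set.Icc (0 : ℝ) R)).exists_bound_of_continuousOn
    (hcA.mono hIccsub)
  have hM0 : 0 ≤ M := le_trans (norm_nonneg (A 0)) (hM 0 ⟨le_rfl, hR0.le⟩)
  -- conclude via an ε-argument
  have main : ∀ δ : ℝ, 0 < δ → (∫ r in Set.Ioc (0 : ℝ) R, A r)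
      ≤ 4 * (∫ r in Set.Ioi (0 : ℝ), B r) + δ := by
    intro δ hδ
    set ε : ℝ := min (δ / (M + 1)) (R / 2) with hεdef
    have hε0 : 0 < ε := lt_min (div_pos hδ (by linarith)) (by linarith)
    have hεR : ε < R := lt_of_le_of_lt (min_le_right _ _) (by linarith)
    have hIocsplit : (∫ r in Set.Ioc (0 : ℝ) R, A r)
        = (∫ r in Set.Ioc (0 : ℝ) ε, A r) + ∫ r in Set.Ioc ε R, A r := by
      rw [← Set.Ioc_union_Ioc_eq_Ioc hε0.le hεR.le]
      exact setIntegral_union (Set.Ioc_disjoint_Ioc_of_le le_rfl) measurableSet_Ioc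
        (hAicc.mono_set (Set.Ioc_subset_Ioc_right hεR.le))
        (hAicc.mono_set (Set.Ioc_subset_Ioc_left hε0.le))
    have hsmall : (∫ r in Set.Ioc (0 : ℝ) ε, A r) ≤ δ := by
      have hb := norm_setIntegral_le_of_norm_le_const (μ := volume) (s := Set.Ioc (0 : ℝ) ε) (f := A)
        (by rw [Real.volume_Ioc]; exact ENNReal.ofReal_lt_top)
        (fun x hx => hM x ⟨le_of_lt hx.1, le_trans hx.2 hεR.le⟩)
      rw [measureReal_def, Real.volume_Ioc, ENNReal.toReal_ofReal (by linarith : (0:ℝ) ≤ ε - 0)] at hb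
      have h1 : (∫ r in Set.Ioc (0 : ℝ) ε, A r) ≤ M * (ε - 0) :=
        le_trans (le_abs_self _) hb
      have hεle : ε ≤ δ / (M + 1) := min_le_left _ _
      have h2 : M * ε ≤ (M + 1) * ε :=
        mul_le_mul_of_nonneg_right (by linarith) hε0.le
      have h3 : (M + 1) * ε ≤ (M + 1) * (δ / (M + 1)) :=
        mul_le_mul_of_nonneg_left hεle (by linarith)
      have h4 : (M + 1) * (δ / (M + 1)) = δ := by field_simp
      linarith
    linarith [key ε hε0 hεR, hIocsplit, hsmall]
  by_contra hcon
  push_neg at hcon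
  have := main (((∫ r in Set.Ioc (0 : ℝ) R, A r) - 4 * (∫ r in Set.Ioi (0 : ℝ), B r)) / 2)
    (by linarith)
  linarith
end

section
/- Let $e_k^{ij}$ be real symmetric constants ($e_k^{ij} = e_k^{ji}$) satisfying the null condition $\sum_{i,j,k=0}^3 e_k^{ij}\omega_i\omega_j\omega_k = 0$ for all $\omega_0 = -1$, $\omega \in \mathbb{S}^2$. Fix $\omega \in \mathbb{S}^2$ and real numbers $u_0, u_1, u_2, u_3$ (interpreted as $u_t = u_0$ and $u_\alpha$), and set $X_\alpha = u_\alpha + \omega_\alpha u_0$ for $\alpha = 1,2,3$. Define $Q_2 = \sum_{k=0}^3\left[u_0^2\left(\tfrac{1}{2}e_k^{00}\omega_k - \sum_{\beta=1}^3 e_k^{\beta 0}\omega_\beta\omega_k\right) - \sum_{\alpha,\beta=1}^3 u_0 u_\beta e_k^{\alpha\beta}\omega_\alpha\omega_k - \tfrac{1}{2}\sum_{\alpha,\beta=1}^3 u_\alpha u_\beta e_k^{\alpha\beta}\omega_k\right]$, where $\omega_0 = -1$. Then $Q_2 = -\tfrac{1}{2}\sum_{k=0}^3\sum_{\alpha,\beta=1}^3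 X_\alpha X_\beta e_k^{\alpha\beta}\omega_k$; in particular $|Q_2| \le C\sum_{\alpha=1}^3 X_\alpha^2$ for a constant $C$ depending only on the $e_k^{ij}$. -/
open Finset

/-- The quadratic form `Q₂` of (4.16): here `e i j k` denotes `e_k^{ij}`, `ω 0 = -1`,
and `u 0 = u_t`. -/
noncomputable def Q2 (e : Fin 4 → Fin 4 → Fin 4 → ℝ) (ω u : Fin 4 → ℝ) : ℝ :=
  ∑ k, ((u 0) ^ 2 * ((1 / 2) * e 0 0 k * ω k -
        ∑ β ∈ ({1, 2, 3} : Finset (Fin 4)), e β 0 k * ω β * ω k) -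
      ∑ α ∈ ({1, 2, 3} : Finset (Fin 4)), ∑ β ∈ ({1, 2, 3} : Finset (Fin 4)),
        u 0 * u β * e α β k * ω α * ω k -
      (1 / 2) * ∑ α ∈ ({1, 2, 3} : Finset (Fin 4)), ∑ β ∈ ({1, 2, 3} : Finset (Fin 4)),
        u α * u β * e α β k * ω k)

lemma sum123 (f : Fin 4 → ℝ) : ∑ x ∈ ({1,2,3} : Finset (Fin 4)), f x = f 1 + f 2 + f 3 := by
  rw [show ({1,2,3}:Finset (Fin 4)) = {1} ∪ {2} ∪ {3} from rfl]
  rw [Finset.sum_union (by decide), Finset.sum_union (by decide)]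
  simp

lemma key (e : Fin 4 → Fin 4 → Fin 4 → ℝ)
    (hsym : ∀ i j k, e i j k = e j i k)
    (hnull : ∀ ω : Fin 4 → ℝ, ω 0 = -1 → ω 1 ^ 2 + ω 2 ^ 2 + ω 3 ^ 2 = 1 →
      ∑ i, ∑ j, ∑ k, e i j k * ω i * ω j * ω k = 0)
    (ω : Fin 4 → ℝ) (hω0 : ω 0 = -1) (hωS : ω 1 ^ 2 + ω 2 ^ 2 + ω 3 ^ 2 = 1)
    (u : Fin 4 → ℝ) :
    Q2 e ω u = -(1 / 2) * ∑ k, ∑ α ∈ ({1, 2, 3} : Finset (Fin 4)),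
        ∑ β ∈ ({1, 2, 3} : Finset (Fin 4)),
        (u α + ω α * u 0) * (u β + ω β * u 0) * e α β k * ω k := by
  have hN := hnull ω hω0 hωS
  simp only [Fin.sum_univ_four, hω0] at hN
  simp only [Q2, Fin.sum_univ_four, sum123, hω0]
  simp only [hsym 1 0, hsym 2 0, hsym 3 0, hsym 2 1, hsym 3 1, hsym 3 2] at hN ⊢
  linear_combination (u 0 ^ 2 / 2) * hN

lemma bound_aux (e : Fin 4 → Fin 4 → Fin 4 → ℝ) (ω' X : Fin 4 → ℝ)
    (hωle : ∀ k : Fin 4, |ω' k| ≤ 1) :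
    |∑ k, ∑ α ∈ ({1, 2, 3} : Finset (Fin 4)), ∑ β ∈ ({1, 2, 3} : Finset (Fin 4)),
        X α * X β * e α β k * ω' k|
      ≤ (∑ k, ∑ α ∈ ({1, 2, 3} : Finset (Fin 4)), ∑ β ∈ ({1, 2, 3} : Finset (Fin 4)), |e α β k|)
          * ∑ α ∈ ({1, 2, 3} : Finset (Fin 4)), (X α) ^ 2 := by
  have hS0 : (0:ℝ) ≤ ∑ α ∈ ({1, 2, 3} : Finset (Fin 4)), (X α) ^ 2 :=
    Finset.sum_nonneg fun _ _ => sq_nonneg _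
  have hXX : ∀ α ∈ ({1, 2, 3} : Finset (Fin 4)), ∀ β ∈ ({1, 2, 3} : Finset (Fin 4)),
      |X α * X β| ≤ ∑ γ ∈ ({1, 2, 3} : Finset (Fin 4)), (X γ) ^ 2 := by
    intro α hα β hβ
    have h1 : |X α * X β| ≤ ((X α)^2 + (X β)^2) / 2 := by
      rw [abs_mul]
      nlinarith [sq_nonneg (|X α| - |X β|), sq_abs (X α), sq_abs (X β)]
    have h2 : ((X α)^2 + (X β)^2) / 2 ≤ ∑ γ ∈ ({1, 2, 3} : Finset (Fin 4)), (X γ) ^ 2 := by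
      rw [sum123]
      fin_cases hα <;> fin_cases hβ <;>
        nlinarith [sq_nonneg (X 1), sq_nonneg (X 2), sq_nonneg (X 3)]
    linarith
  have hterm : ∀ k : Fin 4, ∀ α ∈ ({1, 2, 3} : Finset (Fin 4)),
      ∀ β ∈ ({1, 2, 3} : Finset (Fin 4)),
      |X α * X β * e α β k * ω' k| ≤ |e α β k| * ∑ γ ∈ ({1, 2, 3} : Finset (Fin 4)), (X γ) ^ 2 := by
    intro k α hα β hβ
    rw [abs_mul, abs_mul]
    calc |X α * X β| * |e α β k| * |ω' k|
        ≤ |X α * X β| * |e α β k| * 1 :=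
          mul_le_mul_of_nonneg_left (hωle k) (by positivity)
      _ = |e α β k| * |X α * X β| := by ring
      _ ≤ |e α β k| * ∑ γ ∈ ({1, 2, 3} : Finset (Fin 4)), (X γ) ^ 2 :=
          mul_le_mul_of_nonneg_left (hXX α hα β hβ) (abs_nonneg _)
  calc |∑ k, ∑ α ∈ ({1, 2, 3} : Finset (Fin 4)), ∑ β ∈ ({1, 2, 3} : Finset (Fin 4)),
          X α * X β * e α β k * ω' k|
      ≤ ∑ k, |∑ α ∈ ({1, 2, 3} : Finset (Fin 4)), ∑ β ∈ ({1, 2, 3} : Finset (Fin 4)),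
          X α * X β * e α β k * ω' k| := Finset.abs_sum_le_sum_abs _ _
    _ ≤ ∑ k, ∑ α ∈ ({1, 2, 3} : Finset (Fin 4)), |∑ β ∈ ({1, 2, 3} : Finset (Fin 4)),
          X α * X β * e α β k * ω' k| :=
        Finset.sum_le_sum fun k _ => Finset.abs_sum_le_sum_abs _ _
    _ ≤ ∑ k, ∑ α ∈ ({1, 2, 3} : Finset (Fin 4)), ∑ β ∈ ({1, 2, 3} : Finset (Fin 4)),
          |X α * X β * e α β k * ω' k| :=
        Finset.sum_le_sum fun k _ => Finset.sum_le_sum fun α _ => Finset.abs_sum_le_sum_abs _ _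
    _ ≤ ∑ k, ∑ α ∈ ({1, 2, 3} : Finset (Fin 4)), ∑ β ∈ ({1, 2, 3} : Finset (Fin 4)),
          |e α β k| * ∑ γ ∈ ({1, 2, 3} : Finset (Fin 4)), (X γ) ^ 2 :=
        Finset.sum_le_sum fun k _ => Finset.sum_le_sum fun α hα => Finset.sum_le_sum fun β hβ =>
          hterm k α hα β hβ
    _ = (∑ k, ∑ α ∈ ({1, 2, 3} : Finset (Fin 4)), ∑ β ∈ ({1, 2, 3} : Finset (Fin 4)), |e α β k|)
          * ∑ α ∈ ({1, 2, 3} : Finset (Fin 4)), (X α) ^ 2 := by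
        rw [Finset.sum_mul]; refine Finset.sum_congr rfl fun k _ => ?_
        rw [Finset.sum_mul]; refine Finset.sum_congr rfl fun α _ => ?_
        rw [Finset.sum_mul]

/-- under the null condition,
`Q₂ = -½ ∑_k ∑_{α,β} X_α X_β e_k^{αβ} ω_k` with `X_α = u_α + ω_α u_0`,
and in particular `|Q₂| ≤ C ∑ X_α²` with `C` depending only on `e`. -/
theorem stmt_7 (e : Fin 4 → Fin 4 → Fin 4 → ℝ)
    (hsym : ∀ i j k, e i j k = e j i k)
    (hnull : ∀ ω : Fin 4 → ℝ, ω 0 = -1 → ω 1 ^ 2 + ω 2 ^ 2 + ω 3 ^ 2 = 1 →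
      ∑ i, ∑ j, ∑ k, e i j k * ω i * ω j * ω k = 0)
    (ω : Fin 4 → ℝ) (hω0 : ω 0 = -1) (hωS : ω 1 ^ 2 + ω 2 ^ 2 + ω 3 ^ 2 = 1)
    (u : Fin 4 → ℝ) :
    Q2 e ω u = -(1 / 2) * ∑ k, ∑ α ∈ ({1, 2, 3} : Finset (Fin 4)),
        ∑ β ∈ ({1, 2, 3} : Finset (Fin 4)),
        (u α + ω α * u 0) * (u β + ω β * u 0) * e α β k * ω k ∧
      ∃ C > 0, ∀ ω' u' : Fin 4 → ℝ, ω' 0 = -1 → ω' 1 ^ 2 + ω' 2 ^ 2 + ω' 3 ^ 2 = 1 →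
        |Q2 e ω' u'| ≤ C * ∑ α ∈ ({1, 2, 3} : Finset (Fin 4)),
          (u' α + ω' α * u' 0) ^ 2 := by
  refine ⟨key e hsym hnull ω hω0 hωS u, ?_⟩
  refine ⟨(1/2) * (∑ k, ∑ α ∈ ({1, 2, 3} : Finset (Fin 4)),
      ∑ β ∈ ({1, 2, 3} : Finset (Fin 4)), |e α β k|) + 1, by positivity, ?_⟩
  intro ω' u' h0 hS
  have hωle : ∀ k : Fin 4, |ω' k| ≤ 1 := by
    intro k
    rw [abs_le]
    fin_cases k <;> simp only [Fin.zero_eta, Fin.mk_one, Fin.isValue, id_eq, Fin.reduceFinMk] <;>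
      constructor <;> nlinarith [sq_nonneg (ω' 1), sq_nonneg (ω' 2), sq_nonneg (ω' 3)]
  have hident := key e hsym hnull ω' h0 hS u'
  rw [hident, abs_mul, show |(-(1/2) : ℝ)| = 1/2 by norm_num]
  have habs := bound_aux e ω' (fun α => u' α + ω' α * u' 0) hωle
  have hS0 : (0:ℝ) ≤ ∑ α ∈ ({1, 2, 3} : Finset (Fin 4)), (u' α + ω' α * u' 0) ^ 2 :=
    Finset.sum_nonneg fun _ _ => sq_nonneg _
  nlinarith [habs, hS0]
end
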